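/- Let X be a finite type, let p : X → ℝ → ℝ be a parameterized probability distribution on X (p(x;θ) > 0 for all x, ∑_{x∈X} p(x;θ) = 1 for all θ) with θ ↦ p(x;θ) twice differentiable for each x, and let f : X → ℝ → ℝ with θ ↦ f(x;θ) twice differentiable for each x. Define L(θ) = ∑_{x∈X} p(x;θ) f(x;θ) and g(x;θ) = f(x;θ) ∂_θ log p(x;θ) + ∂_θ f(x;θ). Then for every θ, L''(θ) = ∑_{x∈X} p(x;θ) · ( g(x;θ) ∂_θ log p(x;θ) + ∂_θ f(x;θ) ∂_θ log p(x;θ) + f(x;θ) ∂²_θ log p(x;θ) + ∂²_θ f(x;θ) ). -/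

import Mathlib

/-!
Differentiate `L = ∑ₓ p f` twice termwise: `L'' = ∑ₓ (p'' f + 2 p' f' + p f'')`. The two
score-function identities `p (log p)' = p'` and `p ((log p)'' + ((log p)')²) = p''` turn each
summand into the expanded estimator once `g = f (log p)' + f'` is substituted.
-/

open Real

section SecondDerivative

variable {F G : ℝ → ℝ}

theorem deriv_fun_mul_eq (hF : Differentiable ℝ F) (hG : Differentiable ℝ G) :
    deriv (fun t => F t * G t) = fun t => deriv F t * G t + F t * deriv G t :=
  funext fun t => deriv_fun_mul (hF t) (hG t)

theorem deriv_deriv_fun_mul (hF : ContDiff ℝ 2 F) (hG : ContDiff ℝ 2 G) (θ : ℝ) :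
    deriv (deriv fun t => F t * G t) θ =
      deriv (deriv F) θ * G θ + 2 * (deriv F θ * deriv G θ) + F θ * deriv (deriv G) θ := by
  have hF₁ := hF.differentiable two_ne_zero
  have hG₁ := hG.differentiable two_ne_zero
  have hF₂ := hF.differentiable_deriv_two
  have hG₂ := hG.differentiable_deriv_two
  rw [deriv_fun_mul_eq hF₁ hG₁, (((hF₂ θ).hasDerivAt.fun_mul (hG₁ θ).hasDerivAt).fun_add
    ((hF₁ θ).hasDerivAt.fun_mul (hG₂ θ).hasDerivAt)).deriv]
  ring

theorem deriv_deriv_fun_sum {ι : Type*} (s : Finset ι) (A : ι → ℝ → ℝ)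
    (hA : ∀ i ∈ s, ContDiff ℝ 2 (A i)) (θ : ℝ) :
    deriv (deriv fun t => ∑ i ∈ s, A i t) θ = ∑ i ∈ s, deriv (deriv (A i)) θ := by
  have hderiv : deriv (fun t => ∑ i ∈ s, A i t) = fun t => ∑ i ∈ s, deriv (A i) t :=
    funext fun t => deriv_fun_sum fun i hi => (hA i hi).differentiable two_ne_zero t
  rw [hderiv, deriv_fun_sum fun i hi => (hA i hi).differentiable_deriv_two θ]

end SecondDerivative

section ScoreFunction

variable {F : ℝ → ℝ}

theorem deriv_log_comp_eq (hF : Differentiable ℝ F) (hF₀ : ∀ t, F t ≠ 0) :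
    deriv (fun t => log (F t)) = fun t => deriv F t / F t :=
  funext fun t => deriv.log (hF t) (hF₀ t)

theorem mul_deriv_log_comp (hF : Differentiable ℝ F) (hF₀ : ∀ t, F t ≠ 0) (θ : ℝ) :
    F θ * deriv (fun t => log (F t)) θ = deriv F θ := by
  rw [deriv_log_comp_eq hF hF₀]
  field_simp [hF₀ θ]

theorem mul_deriv_deriv_log_comp_add_sq (hF : ContDiff ℝ 2 F) (hF₀ : ∀ t, F t ≠ 0) (θ : ℝ) :
    F θ * (deriv (deriv fun t => log (F t)) θ + deriv (fun t => log (F t)) θ ^ 2) =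
      deriv (deriv F) θ := by
  have hF₁ := hF.differentiable two_ne_zero
  rw [deriv_log_comp_eq hF₁ hF₀, deriv_fun_div (hF.differentiable_deriv_two θ) (hF₁ θ) (hF₀ θ)]
  field_simp [hF₀ θ]
  ring

end ScoreFunction

theorem second_order_estimator_expanded_general
    {X : Type*} [Fintype X] (p f g : X → ℝ → ℝ)
    (hp_pos : ∀ x θ, 0 < p x θ)
    (hp_smooth : ∀ x, ContDiff ℝ 2 (p x))
    (hf_smooth : ∀ x, ContDiff ℝ 2 (f x))
    (hg : ∀ x θ, g x θ =
      f x θ * deriv (fun θ => Real.log (p x θ)) θ + deriv (f x) θ) :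
    ∀ θ : ℝ,
      deriv (deriv (fun θ => ∑ x, p x θ * f x θ)) θ =
        ∑ x, p x θ *
          (g x θ * deriv (fun θ => Real.log (p x θ)) θ
            + deriv (f x) θ * deriv (fun θ => Real.log (p x θ)) θ
            + f x θ * deriv (deriv (fun θ => Real.log (p x θ))) θ
            + deriv (deriv (f x)) θ) := by
  intro θ
  rw [deriv_deriv_fun_sum _ _ fun x _ => (hp_smooth x).mul (hf_smooth x)]
  refine Finset.sum_congr rfl fun x _ => ?_
  have hp₀ : ∀ t, p x t ≠ 0 := fun t => (hp_pos x t).ne'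
  have hscore := mul_deriv_log_comp ((hp_smooth x).differentiable two_ne_zero) hp₀ θ
  have hscore₂ := mul_deriv_deriv_log_comp_add_sq (hp_smooth x) hp₀ θ
  rw [deriv_deriv_fun_mul (hp_smooth x) (hf_smooth x), hg]
  linear_combination (-f x θ) * hscore₂ - 2 * deriv (f x) θ * hscore

/-- Expanded form of the exact second-order score function estimator:
`L''(θ) = ∑_x p(x;θ) (g ∂_θ log p + ∂_θ f ∂_θ log p + f ∂²_θ log p + ∂²_θ f)`. -/
theorem second_order_estimator_expanded
    {X : Type*} [Fintype X] (p f g : X → ℝ → ℝ)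
    (hp_pos : ∀ x θ, 0 < p x θ)
    (hp_sum : ∀ θ, ∑ x, p x θ = 1)
    (hp_smooth : ∀ x, ContDiff ℝ 2 (p x))
    (hf_smooth : ∀ x, ContDiff ℝ 2 (f x))
    (hg : ∀ x θ, g x θ =
      f x θ * deriv (fun θ => Real.log (p x θ)) θ + deriv (f x) θ) :
    ∀ θ : ℝ,
      deriv (deriv (fun θ => ∑ x, p x θ * f x θ)) θ =
        ∑ x, p x θ *
          (g x θ * deriv (fun θ => Real.log (p x θ)) θ
            + deriv (f x) θ * deriv (fun θ => Real.log (p x θ)) θ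
            + f x θ * deriv (deriv (fun θ => Real.log (p x θ))) θ
            + deriv (deriv (f x)) θ) :=
  second_order_estimator_expanded_general p f g hp_pos hp_smooth hf_smooth hg
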